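/- Let W be a complete positive ordered abelian semigroup that satisfies the weak ω-comparison property and contains elements v, w with v ≪ w and v full. Then W satisfies the Corona Factorization Property for semigroups. -/

import Mathlib

namespace Stmt3

variable {W : Type*} [AddCommSemigroup W] [PartialOrder W]

/-- `rep n x` is the `(n+1)`-fold sum `x + x + ⋯ + x`, so that `rep n x = (n+1)·x`. -/
def rep : ℕ → W → W
  | 0, x => x
  | n + 1, x => rep n x + x

/-- `sumTo y n = y 0 + y 1 + ⋯ + y n`. -/
def sumTo (y : ℕ → W) : ℕ → W
  | 0 => y 0
  | n + 1 => sumTo y n + y (n + 1)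

/-- `x ∝ y` : `x ≤ n·y` for some positive integer `n` (encoded as `n + 1`, `n : ℕ`). -/
def Propto (x y : W) : Prop := ∃ n : ℕ, x ≤ rep n y

/-- `x <_s y` : `(k+1)·x ≤ k·y` for some positive integer `k`. -/
def StDom (x y : W) : Prop := ∃ k : ℕ, rep (k + 1) x ≤ rep k y

/-- `x ≪ y` : for every increasing sequence whose supremum exists and dominates `y`,
some term of the sequence dominates `x`. -/
def CC (x y : W) : Prop :=
  ∀ f : ℕ → W, Monotone f → ∀ s : W, IsLUB (Set.range f) s → y ≤ s → ∃ n, x ≤ f n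

/-- `W` is complete: every increasing sequence has a supremum, and `x ≤ y` holds as soon
as `x' ≤ y` for every `x' ≪ x`. -/
def Complete (W : Type*) [AddCommSemigroup W] [PartialOrder W] : Prop :=
  (∀ f : ℕ → W, Monotone f → ∃ s : W, IsLUB (Set.range f) s) ∧
    ∀ x y : W, (∀ x' : W, CC x' x → x' ≤ y) → x ≤ y

/-- A full sequence: increasing, and for all `y' ≪ y` one has `y' ∝ x n` for some `n`. -/
def FullSeq (x : ℕ → W) : Prop :=
  Monotone x ∧ ∀ y' y : W, CC y' y → ∃ n, Propto y' (x n)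

/-- A full element: `y' ∝ x` for all `y' ≪ y`. -/
def FullElem (x : W) : Prop := ∀ y' y : W, CC y' y → Propto y' x

/-- The Corona Factorization Property for semigroups: for every full sequence `(x_n)`,
every sequence `(y_n)`, every `x' ≪ x_0` and every positive integer `m` (encoded `m+1`)
with `x_n ≤ m·y_n` for all `n`, one has `x' ≤ y_0 + ⋯ + y_k` for some `k`. -/
def CFP (W : Type*) [AddCommSemigroup W] [PartialOrder W] : Prop :=
  ∀ x : ℕ → W, FullSeq x → ∀ y : ℕ → W, ∀ x' : W, ∀ m : ℕ,
    CC x' (x 0) → (∀ n, x n ≤ rep m (y n)) → ∃ k, x' ≤ sumTo y k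


/-- The weak ω-comparison property: whenever `x' ≪ x`, the `y_j` are full elements, and
`x <_s y_j` for all `j`, then `x' ≤ y_0 + ⋯ + y_n` for some `n`. -/
def WeakOmegaComparison (W : Type*) [AddCommSemigroup W] [PartialOrder W] : Prop :=
  ∀ x' x : W, ∀ y : ℕ → W, (∀ j, FullElem (y j)) → CC x' x → (∀ j, StDom x (y j)) →
    ∃ n, x' ≤ sumTo y n

/-!
Since `v ≪ w` and `v` is full, `v ∝ x n₀` for some `n₀`. Cut the tail `y n₀, y (n₀+1), …` into
consecutive blocks `B j` of `m + 2` terms each. Every block dominates some `y n` with `n ≥ n₀`,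
hence `x n₀ ≤ (m+1)·B j`, so each `B j` is full. Summing `x 0 ≤ x n ≤ (m+1)·y n` over a block
gives `(m+2)·x 0 ≤ (m+1)·B j`, i.e. `x 0 <_s B j`. Weak ω-comparison now yields
`x' ≤ B 0 + ⋯ + B n`, which is a partial sum of the `y`'s.
-/

set_option linter.unusedSectionVars false

section Rep

theorem rep_add_rep (a : W) (s : ℕ) : ∀ t, rep s a + rep t a = rep (s + t + 1) a
  | 0 => rfl
  | t + 1 => by
    change rep s a + (rep t a + a) = rep (s + t + 1) a + a
    rw [← add_assoc, rep_add_rep a s t]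

theorem rep_rep (a : W) (q : ℕ) : ∀ p, rep p (rep q a) = rep (p * q + p + q) a
  | 0 => by simp [rep]
  | p + 1 => by
    change rep p (rep q a) + rep q a = _
    rw [rep_rep a q p, rep_add_rep]
    congr 1
    ring

theorem rep_add (a b : W) : ∀ n, rep n (a + b) = rep n a + rep n b
  | 0 => rfl
  | n + 1 => by
    change rep n (a + b) + (a + b) = (rep n a + a) + (rep n b + b)
    rw [rep_add a b n, add_add_add_comm]

variable [AddLeftMono W]

theorem rep_le_rep {a b : W} (h : a ≤ b) : ∀ n, rep n a ≤ rep n b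
  | 0 => h
  | n + 1 => add_le_add (rep_le_rep h n) h

theorem Propto.trans {a b c : W} (hab : Propto a b) (hbc : Propto b c) : Propto a c := by
  obtain ⟨p, hp⟩ := hab
  obtain ⟨q, hq⟩ := hbc
  exact ⟨p * q + p + q, (hp.trans (rep_le_rep hq p)).trans_eq (rep_rep c q p)⟩

theorem FullElem.of_propto {a b : W} (ha : FullElem a) (hab : Propto a b) : FullElem b :=
  fun y' y hy => (ha y' y hy).trans hab

end Rep

section SumTo

theorem sumTo_add (f : ℕ → W) (a : ℕ) :
    ∀ r, sumTo f (a + 1 + r) = sumTo f a + sumTo (fun i => f (a + 1 + i)) r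
  | 0 => rfl
  | r + 1 => by
    change sumTo f (a + 1 + r) + f (a + 1 + r + 1) = _ + (_ + f (a + 1 + (r + 1)))
    rw [sumTo_add f a r, add_assoc]
    rfl

theorem sumTo_blocks (f : ℕ → W) (l : ℕ) :
    ∀ n, sumTo (fun j => sumTo (fun i => f (j * (l + 1) + i)) l) n = sumTo f (n * (l + 1) + l)
  | 0 => by simp only [sumTo, zero_mul, zero_add]
  | n + 1 => by
    change _ + sumTo (fun i => f ((n + 1) * (l + 1) + i)) l = _
    rw [sumTo_blocks f l n, show (n + 1) * (l + 1) + l = n * (l + 1) + l + 1 + l by ring,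
      sumTo_add]
    congr 2
    funext i
    congr 1
    ring

theorem rep_le_rep_sumTo [AddLeftMono W] {a : W} {m : ℕ} {f : ℕ → W}
    (h : ∀ i, a ≤ rep m (f i)) : ∀ r, rep r a ≤ rep m (sumTo f r)
  | 0 => h 0
  | r + 1 => by
    change rep r a + a ≤ rep m (sumTo f r + f (r + 1))
    rw [rep_add]
    exact add_le_add (rep_le_rep_sumTo h r) (h (r + 1))

theorem apply_zero_le_sumTo (hpos : ∀ x z : W, x ≤ x + z) (f : ℕ → W) : ∀ r, f 0 ≤ sumTo f r
  | 0 => le_rfl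
  | r + 1 => (apply_zero_le_sumTo hpos f r).trans (hpos _ _)

theorem sumTo_shift_le (hpos : ∀ x z : W, x ≤ x + z) (f : ℕ → W) (r : ℕ) :
    ∀ a, sumTo (fun i => f (a + i)) r ≤ sumTo f (a + r)
  | 0 => by simp only [zero_add, le_rfl]
  | a + 1 => by
    rw [sumTo_add f a r]
    exact (hpos _ _).trans_eq (add_comm _ _)

end SumTo

theorem cfp_of_weakOmegaComparison_general
    (hadd : ∀ x y z : W, x ≤ y → x + z ≤ y + z)
    (hpos : ∀ x z : W, x ≤ x + z)
    (hweak : WeakOmegaComparison W)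
    (hvw : ∃ v w : W, CC v w ∧ FullElem v) :
    CFP W := by
  have : AddLeftMono W := ⟨fun z x y h => by simpa only [add_comm z] using hadd x y z h⟩
  intro x ⟨hmono, hfull⟩ y x' m hx' hxy
  obtain ⟨v, w, hvw, hv⟩ := hvw
  obtain ⟨n₀, hvx⟩ := hfull v w hvw
  set B : ℕ → W := fun j => sumTo (fun i => y (n₀ + (j * (m + 2) + i))) (m + 1)
  have hBfull : ∀ j, FullElem (B j) := fun j =>
    hv.of_propto <| hvx.trans ⟨m, calc
      x n₀ ≤ x (n₀ + (j * (m + 2) + 0)) := hmono (Nat.le_add_right _ _)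
      _ ≤ rep m (y (n₀ + (j * (m + 2) + 0))) := hxy _
      _ ≤ rep m (B j) :=
        rep_le_rep (apply_zero_le_sumTo hpos (fun i => y (n₀ + (j * (m + 2) + i))) _) m⟩
  have hdom : ∀ j, StDom (x 0) (B j) := fun j =>
    ⟨m, rep_le_rep_sumTo (fun _ => (hmono (Nat.zero_le _)).trans (hxy _)) (m + 1)⟩
  obtain ⟨n, hn⟩ := hweak x' (x 0) B hBfull hx' hdom
  exact ⟨n₀ + (n * (m + 2) + (m + 1)), hn.trans <|
    (sumTo_blocks (fun i => y (n₀ + i)) (m + 1) n).le.trans (sumTo_shift_le hpos y _ n₀)⟩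

/-- Proposition 2.21: a complete positive ordered abelian semigroup with the weak
ω-comparison property, containing a full element compactly contained in another element,
satisfies the Corona Factorization Property for semigroups. -/
theorem cfp_of_weakOmegaComparison
    (hadd : ∀ x y z : W, x ≤ y → x + z ≤ y + z)
    (hpos : ∀ x z : W, x ≤ x + z)
    (hcomplete : Complete W)
    (hweak : WeakOmegaComparison W)
    (hvw : ∃ v w : W, CC v w ∧ FullElem v) :
    CFP W :=
  cfp_of_weakOmegaComparison_general hadd hpos hweak hvw

end Stmt3
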